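/- Let N be a binary matroid and a ∈ E(N) such that N \ a ≅ M(K_{3,3}). Then no element of N/a lies simultaneously in a 2-element circuit of N/a and in an odd circuit of N/a. -/

import Mathlib

open scoped Classical

namespace PaperSplit

variable {α β : Type}

/-- `A` is a matrix representation (columns indexed by `α`, rows by `η`) of the
matroid `M` over `GF(2)`, with ground set `E`. -/
def RepresentsOn {η : Type} (A : α → η → ZMod 2) (E : Set α) (M : Matroid α) : Prop :=
  M.E = E ∧ ∀ I ⊆ E, (M.Indep I ↔ LinearIndependent (ZMod 2) (fun i : I => A i.1))

/-- The columns of the matrix `A_T`: one extra row (indexed by `none`) is appended,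
with entry `1` exactly in the columns of `T`. -/
noncomputable def splitCols {η : Type} (A : α → η → ZMod 2) (T : Set α) :
    α → Option η → ZMod 2 :=
  fun a o => Option.elim o (if a ∈ T then 1 else 0) (A a)

/-- `MT` is the splitting matroid of `M` with respect to `T`. -/
def IsSplitting (M : Matroid α) (T : Set α) (MT : Matroid α) : Prop :=
  ∃ (η : Type) (A : α → η → ZMod 2),
    RepresentsOn A M.E M ∧ RepresentsOn (splitCols A T) M.E MT

/-- `M` is a binary matroid. -/
def IsBinary (M : Matroid α) : Prop :=
  ∃ (η : Type) (A : α → η → ZMod 2), RepresentsOn A M.E M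

/-- Deletion of a set of elements. -/
def del (M : Matroid α) (D : Set α) : Matroid α := M.restrict (M.E \ D)

/-- Contraction of a set of elements. -/
def con (M : Matroid α) (C : Set α) : Matroid α := (del M.dual C).dual

/-- `N` is a minor of `M`. -/
def IsMinorOf (N M : Matroid α) : Prop := ∃ X Y, Disjoint X Y ∧ N = con (del M X) Y

/-- `C` is a circuit (minimal dependent set) of `M`. -/
def circuit (M : Matroid α) (C : Set α) : Prop :=
  C ⊆ M.E ∧ ¬ M.Indep C ∧ ∀ D ⊂ C, M.Indep D

/-- `C` is a cocircuit of `M`, i.e. a circuit of the dual. -/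
def cocircuit (M : Matroid α) (C : Set α) : Prop := circuit M.dual C

def isLoop (M : Matroid α) (e : α) : Prop := circuit M {e}

def isColoop (M : Matroid α) (e : α) : Prop := isLoop M.dual e

/-- Matroid isomorphism. -/
def MIso (M : Matroid α) (N : Matroid β) : Prop :=
  ∃ e : M.E ≃ N.E, ∀ I : Set M.E,
    M.Indep (Subtype.val '' I) ↔ N.Indep (Subtype.val '' (e '' I))

/-- A graphic matroid: one represented over `GF(2)` by a vertex–edge incidence
matrix (each column is zero or the sum of two distinct standard basis vectors). -/
def IsGraphic (M : Matroid α) : Prop :=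
  ∃ (V : Type) (A : α → V → ZMod 2), RepresentsOn A M.E M ∧
    ∀ a ∈ M.E, A a = 0 ∨ ∃ u v : V, u ≠ v ∧
      A a = fun w => (if w = u then (1 : ZMod 2) else 0) + (if w = v then 1 else 0)

def IsCographic (M : Matroid α) : Prop := IsGraphic M.dual

/-- A multigraph with vertex type `V` and edge type `E`. -/
structure Multigraph (V E : Type) where
  ends : E → Sym2 V

/-- The mod-2 vertex–edge incidence matrix of a multigraph. -/
noncomputable def Multigraph.inc {V E : Type} (G : Multigraph V E) : E → V → ZMod 2 :=
  fun e v => if G.ends e = Sym2.mk v v then 0 else if v ∈ G.ends e then 1 else 0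

/-- `M` is the cycle matroid of the multigraph `G`. -/
def IsCycleMatroidOf {V E : Type} (G : Multigraph V E) (M : Matroid E) : Prop :=
  RepresentsOn G.inc Set.univ M

def Multigraph.Adj {V E : Type} (G : Multigraph V E) (u v : V) : Prop :=
  ∃ e, G.ends e = Sym2.mk u v

def Multigraph.Connected {V E : Type} (G : Multigraph V E) : Prop :=
  Nonempty V ∧ ∀ u v : V, Relation.ReflTransGen G.Adj u v

noncomputable def Multigraph.degree {V E : Type} (G : Multigraph V E) (v : V) : ℕ :=
  Nat.card {e | v ∈ G.ends e ∧ ¬ (G.ends e).IsDiag} +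
    2 * Nat.card {e | G.ends e = Sym2.mk v v}

def Multigraph.Eulerian {V E : Type} (G : Multigraph V E) : Prop :=
  G.Connected ∧ ∀ v, Even (G.degree v)

/-- The Fano matroid `F₇`: represented over `GF(2)` by the seven distinct
nonzero vectors of `GF(2)³`. -/
def IsFano (M : Matroid (Fin 7)) : Prop :=
  ∃ A : Fin 7 → Fin 3 → ZMod 2, RepresentsOn A Set.univ M ∧
    Function.Injective A ∧ ∀ i, A i ≠ 0

/-- The complete graph `K₅` as a multigraph. -/
def K5 : Multigraph (Fin 5) {p : Sym2 (Fin 5) // ¬ p.IsDiag} := ⟨fun e => e.1⟩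

/-- The complete bipartite graph `K₃,₃` as a multigraph. -/
def K33 : Multigraph (Fin 3 ⊕ Fin 3) (Fin 3 × Fin 3) :=
  ⟨fun e => Sym2.mk (Sum.inl e.1) (Sum.inr e.2)⟩

end PaperSplit

/-!
A circuit of `N ／ a` is either a circuit of `N ＼ a` or becomes a circuit of `N` once `a` is added.
Circuits of `N ＼ a ≅ M(K₃,₃)` are even and never have two elements, so the circuits `C₂` and `Co`
of `N ／ a` extend to circuits `P = C₂ + a` and `Q = Co + a` of `N`. In a `GF(2)`-representation
the columns of a circuit sum to zero, hence so do the columns of `P ∆ Q`, which avoids `a`. Such a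
set is a disjoint union of circuits of `N ＼ a`, so it is even; yet
`|P ∆ Q| ≡ |P| + |Q| = 3 + |Co| + 1` is odd.
-/

open Set
open scoped symmDiff

lemma Function.Injective.forall_ssubset_image_iff {α β : Type*} {f : α → β}
    (hf : Function.Injective f) {s : Set α} {P : Set β → Prop} :
    (∀ t ⊂ f '' s, P t) ↔ ∀ t ⊂ s, P (f '' t) := by
  refine ⟨fun h t ht => h _ (hf.image_strictMono ht), fun h t ht => ?_⟩
  have hft : f '' (f ⁻¹' t) = t :=
    image_preimage_eq_of_subset (ht.subset.trans (image_subset_range _ _))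
  rw [← hft] at ht ⊢
  exact h _ (by simpa only [ssubset_def, image_subset_image_iff hf] using ht)

namespace Finset

variable {α G : Type*} [DecidableEq α] [AddCommGroup G] [Module (ZMod 2) G]

lemma sum_symmDiff (s t : Finset α) (f : α → G) :
    ∑ x ∈ s ∆ t, f x = ∑ x ∈ s, f x + ∑ x ∈ t, f x := by
  have hunion : ∑ x ∈ s ∪ t, f x = ∑ x ∈ s ∆ t, f x + ∑ x ∈ s ∩ t, f x := by
    have hst : s ∆ t ∪ s ∩ t = s ∪ t := symmDiff_sup_inf s t
    rw [← hst]
    exact sum_union (disjoint_symmDiff_inf s t)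
  rw [← sum_union_inter, hunion, add_assoc, ZModModule.add_self, add_zero]

lemma natCast_card_symmDiff (s t : Finset α) : (#(s ∆ t) : ZMod 2) = #s + #t := by
  simpa using sum_symmDiff s t (fun _ => (1 : ZMod 2))

end Finset

namespace Matroid

variable {α : Type*} {M : Matroid α} {e : α} {C : Set α}

lemma isCircuit_or_isCircuit_insert_of_contractElem (hC : (M ／ {e}).IsCircuit C) :
    M.IsCircuit C ∨ M.IsCircuit (insert e C) := by
  obtain ⟨C', hC', hCC', hC'C⟩ := hC.exists_subset_isCircuit_of_contract
  rw [union_singleton] at hC'C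
  by_cases he : e ∈ C'
  · exact .inr ((hC'C.antisymm (insert_subset he hCC')) ▸ hC')
  · exact .inl ((hCC'.antisymm ((subset_insert_iff_of_notMem he).1 hC'C)) ▸ hC')

lemma exists_finset_insert_isCircuit_of_contractElem (hC : (M ／ {e}).IsCircuit C)
    (hdel : ¬ (M ＼ {e}).IsCircuit C) (hfin : C.Finite) :
    ∃ P : Finset α, M.IsCircuit P ∧ e ∈ P ∧ P.card = C.ncard + 1 := by
  have heC : e ∉ C := fun h => (hC.subset_ground h).2 rfl
  have hins : M.IsCircuit (insert e C) := by
    refine (isCircuit_or_isCircuit_insert_of_contractElem hC).resolve_left fun hMC => hdel ?_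
    exact delete_isCircuit_iff.2 ⟨hMC, disjoint_singleton_right.2 heC⟩
  obtain ⟨P, hPC⟩ := (hfin.insert e).exists_finset_coe
  refine ⟨P, hPC ▸ hins, by simp [← Finset.mem_coe, hPC], ?_⟩
  rw [← ncard_coe_finset, hPC, ncard_insert_of_notMem heC hfin]

end Matroid

namespace PaperSplit

open Matroid

variable {α β : Type}

lemma circuit_iff_isCircuit {M : Matroid α} {C : Set α} : circuit M C ↔ M.IsCircuit C := by
  rw [isCircuit_iff_forall_ssubset, Dep, circuit]
  tauto

lemma circuit_image_val_iff {M : Matroid α} (I : Set M.E) :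
    circuit M (Subtype.val '' I) ↔
      ¬ M.Indep (Subtype.val '' I) ∧ ∀ J ⊂ I, M.Indep (Subtype.val '' J) := by
  rw [circuit, Subtype.val_injective.forall_ssubset_image_iff]
  exact and_iff_right (Subtype.coe_image_subset _ _)

lemma MIso.exists_isCircuit_ncard_eq {M : Matroid α} {N : Matroid β} (h : MIso M N)
    {C : Set α} (hC : M.IsCircuit C) : ∃ C', N.IsCircuit C' ∧ C'.ncard = C.ncard := by
  obtain ⟨e, he⟩ := h
  obtain ⟨I, rfl⟩ : ∃ I : Set M.E, Subtype.val '' I = C :=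
    ⟨_, image_preimage_eq_of_subset (by simpa using hC.subset_ground)⟩
  refine ⟨Subtype.val '' (e '' I), ?_, ?_⟩
  · rw [← circuit_iff_isCircuit, circuit_image_val_iff, e.injective.forall_ssubset_image_iff]
    rw [← circuit_iff_isCircuit, circuit_image_val_iff] at hC
    simpa only [← he] using hC
  · rw [ncard_image_of_injective _ Subtype.val_injective, ncard_image_of_injective _ e.injective,
      ncard_image_of_injective _ Subtype.val_injective]

section RepresentsOn

variable {η : Type} {A : α → η → ZMod 2} {E : Set α} {M : Matroid α}

lemma RepresentsOn.delete (hA : RepresentsOn A E M) (D : Set α) :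
    RepresentsOn A (E \ D) (M ＼ D) := by
  refine ⟨by rw [delete_ground, hA.1], fun I hI => ?_⟩
  rw [delete_indep_iff, hA.2 I (hI.trans sdiff_subset)]
  exact and_iff_left (subset_sdiff.1 hI).2

lemma RepresentsOn.not_indep_of_sum_eq_zero (hA : RepresentsOn A E M) {D : Finset α}
    (hDE : ↑D ⊆ E) (hD : D.Nonempty) (hsum : ∑ x ∈ D, A x = 0) : ¬ M.Indep D := by
  rw [hA.2 _ hDE]
  intro hli
  obtain ⟨x, hx⟩ := hD
  exact one_ne_zero (linearIndepOn_finset_iff.1 hli (fun _ => 1) (by simpa using hsum) x hx)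

/-- Over `GF(2)` the only nonzero coefficient is `1`, and minimality of the circuit forces the
support of a dependency among its columns to be all of it. -/
lemma RepresentsOn.sum_eq_zero_of_isCircuit (hA : RepresentsOn A E M) {C : Finset α}
    (hC : M.IsCircuit C) : ∑ x ∈ C, A x = 0 := by
  have hCE : ↑C ⊆ E := hA.1 ▸ hC.subset_ground
  have hdep : ¬ LinearIndepOn (ZMod 2) A (C : Set α) := (hA.2 _ hCE).not.1 hC.not_indep
  obtain ⟨f, hf, x, hx, hfx⟩ := not_linearIndepOn_finset_iff.1 hdep
  have hsupp : ∑ y ∈ C.filter (f · ≠ 0), A y = 0 := by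
    rw [Finset.sum_filter]
    refine (Finset.sum_congr rfl fun y _ => ?_).trans hf
    rcases (by decide : ∀ c : ZMod 2, c = 0 ∨ c = 1) (f y) with h | h <;> simp [h]
  have hsub : (↑(C.filter (f · ≠ 0)) : Set α) ⊆ C := Finset.coe_subset.2 (Finset.filter_subset _ _)
  have heq := hC.eq_of_not_indep_subset (hA.not_indep_of_sum_eq_zero (hsub.trans hCE)
    ⟨x, Finset.mem_filter.2 ⟨hx, hfx⟩⟩ hsupp) hsub
  rwa [Finset.coe_inj.1 heq] at hsupp

/-- A set of columns summing to zero is a disjoint union of circuits. -/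
lemma RepresentsOn.even_card_of_sum_eq_zero (hA : RepresentsOn A E M)
    (heven : ∀ C, M.IsCircuit C → Even C.ncard) (D : Finset α) (hDE : ↑D ⊆ E)
    (hsum : ∑ x ∈ D, A x = 0) : Even D.card := by
  induction D using Finset.strongInduction with
  | H D ih =>
  obtain rfl | hD := D.eq_empty_or_nonempty
  · simp
  have hdep : M.Dep D := ⟨hA.not_indep_of_sum_eq_zero hDE hD hsum, hA.1 ▸ hDE⟩
  obtain ⟨C, hCD, hC⟩ := hdep.exists_isCircuit_subset
  obtain ⟨C, rfl⟩ := (D.finite_toSet.subset hCD).exists_finset_coe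
  rw [Finset.coe_subset] at hCD
  have hrest : ∑ x ∈ D \ C, A x = 0 := by
    have hsplit := Finset.sum_sdiff hCD (f := A)
    rwa [hA.sum_eq_zero_of_isCircuit hC, add_zero, hsum] at hsplit
  have hlt : D \ C ⊂ D := Finset.sdiff_ssubset hCD (by simpa using hC.nonempty)
  rw [← Finset.card_sdiff_add_card_eq_card hCD]
  refine (ih _ hlt (subset_trans (by simp) hDE) hrest).add ?_
  simpa using heven _ hC

lemma RepresentsOn.ncard_ne_two_of_isCircuit (hA : RepresentsOn A E M) (hinj : InjOn A E)
    {C : Set α} (hC : M.IsCircuit C) : C.ncard ≠ 2 := by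
  intro h2
  obtain ⟨x, y, hxy, rfl⟩ := ncard_eq_two.1 h2
  have hsum := hA.sum_eq_zero_of_isCircuit (C := {x, y}) (by simpa using hC)
  rw [Finset.sum_pair hxy, ← ZModModule.sub_eq_add, sub_eq_zero] at hsum
  have hxyE : {x, y} ⊆ E := hA.1 ▸ hC.subset_ground
  exact hxy (hinj (hxyE (mem_insert _ _)) (hxyE (mem_insert_of_mem _ rfl)) hsum)

lemma RepresentsOn.even_card_symmDiff {e : α} (hA : RepresentsOn A M.E M)
    (heven : ∀ C, (M ＼ {e}).IsCircuit C → Even C.ncard) {P Q : Finset α}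
    (hP : M.IsCircuit P) (hQ : M.IsCircuit Q) (heP : e ∈ P) (heQ : e ∈ Q) :
    Even (P ∆ Q).card := by
  refine (hA.delete {e}).even_card_of_sum_eq_zero heven _ (fun x hx => ?_) ?_
  · rw [Finset.coe_symmDiff, Set.mem_symmDiff, Finset.mem_coe, Finset.mem_coe] at hx
    rcases hx with ⟨hxP, hxQ⟩ | ⟨hxQ, hxP⟩
    · exact ⟨hP.subset_ground hxP, fun hxe => hxQ ((mem_singleton_iff.1 hxe) ▸ heQ)⟩
    · exact ⟨hQ.subset_ground hxQ, fun hxe => hxP ((mem_singleton_iff.1 hxe) ▸ heP)⟩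
  · rw [Finset.sum_symmDiff, hA.sum_eq_zero_of_isCircuit hP, hA.sum_eq_zero_of_isCircuit hQ,
      add_zero]

end RepresentsOn

lemma K33_inc_inl (p : Fin 3 × Fin 3) (i : Fin 3) :
    K33.inc p (Sum.inl i) = if p.1 = i then 1 else 0 := by
  simp [Multigraph.inc, K33, eq_comm]

lemma K33_inc_inr (p : Fin 3 × Fin 3) (j : Fin 3) :
    K33.inc p (Sum.inr j) = if p.2 = j then 1 else 0 := by
  simp [Multigraph.inc, K33, eq_comm]

lemma K33_inc_injective : Function.Injective K33.inc := by
  intro p q hpq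
  refine Prod.ext (Eq.symm ?_) (Eq.symm ?_)
  · simpa [K33_inc_inl] using congrFun hpq (Sum.inl p.1)
  · simpa [K33_inc_inr] using congrFun hpq (Sum.inr p.2)

/-- Every edge of `K₃,₃` has exactly one end on the left, so the three left rows of the incidence
matrix add up to the all-ones row. -/
lemma K33_even_ncard_of_isCircuit {MK : Matroid (Fin 3 × Fin 3)} (hK : IsCycleMatroidOf K33 MK)
    {J : Set (Fin 3 × Fin 3)} (hJ : MK.IsCircuit J) : Even J.ncard := by
  obtain ⟨J, rfl⟩ := J.toFinite.exists_finset_coe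
  have hsum := hK.sum_eq_zero_of_isCircuit hJ
  rw [ncard_coe_finset, ← ZMod.natCast_eq_zero_iff_even]
  calc (J.card : ZMod 2) = ∑ p ∈ J, ∑ i, K33.inc p (Sum.inl i) := by simp [K33_inc_inl]
    _ = ∑ i, (∑ p ∈ J, K33.inc p) (Sum.inl i) := by
      rw [Finset.sum_comm]
      simp only [Finset.sum_apply]
    _ = 0 := by
      rw [hsum]
      simp

theorem contract_K33_no_two_and_odd_general {α : Type} (N : Matroid α) (a : α)
    (MK : Matroid (Fin 3 × Fin 3))
    (hbin : IsBinary N)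
    (hK : IsCycleMatroidOf K33 MK) (hiso : MIso (del N {a}) MK) :
    ¬ ∃ (x : α) (C₂ Co : Set α), circuit (con N {a}) C₂ ∧ circuit (con N {a}) Co ∧
      x ∈ C₂ ∧ x ∈ Co ∧ C₂.ncard = 2 ∧ Odd Co.ncard := by
  rintro ⟨-, C₂, Co, h2, ho, -, -, hcard2, hodd⟩
  obtain ⟨η, A, hA⟩ := hbin
  have hdel : ∀ C, (N ＼ {a}).IsCircuit C → Even C.ncard ∧ C.ncard ≠ 2 := fun C hC => by
    obtain ⟨J, hJ, hJC⟩ := hiso.exists_isCircuit_ncard_eq hC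
    rw [← hJC]
    exact ⟨K33_even_ncard_of_isCircuit hK hJ,
      hK.ncard_ne_two_of_isCircuit K33_inc_injective.injOn hJ⟩
  obtain ⟨P, hP, haP, hPcard⟩ := exists_finset_insert_isCircuit_of_contractElem
    (circuit_iff_isCircuit.1 h2) (fun h => (hdel _ h).2 hcard2)
    (finite_of_ncard_ne_zero (by omega))
  obtain ⟨Q, hQ, haQ, hQcard⟩ := exists_finset_insert_isCircuit_of_contractElem
    (circuit_iff_isCircuit.1 ho) (fun h => Nat.not_even_iff_odd.2 hodd (hdel _ h).1)
    (finite_of_ncard_ne_zero hodd.pos.ne')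
  have hPQ := hA.even_card_symmDiff (fun C hC => (hdel C hC).1) hP hQ haP haQ
  rw [← ZMod.natCast_eq_zero_iff_even, Finset.natCast_card_symmDiff, hPcard, hQcard, hcard2]
    at hPQ
  push_cast [ZMod.natCast_eq_one_iff_odd.2 hodd] at hPQ
  exact absurd hPQ (by decide)

/-- If `N` is binary and `N \ a ≅ M(K₃,₃)`, then no element of `N/a`
lies simultaneously in a 2-element circuit and in an odd circuit of `N/a`. -/
theorem contract_K33_no_two_and_odd {α : Type} (N : Matroid α) (a : α)
    (MK : Matroid (Fin 3 × Fin 3))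
    (hbin : IsBinary N) (ha : a ∈ N.E)
    (hK : IsCycleMatroidOf K33 MK) (hiso : MIso (del N {a}) MK) :
    ¬ ∃ (x : α) (C₂ Co : Set α), circuit (con N {a}) C₂ ∧ circuit (con N {a}) Co ∧
      x ∈ C₂ ∧ x ∈ Co ∧ C₂.ncard = 2 ∧ Odd Co.ncard :=
  contract_K33_no_two_and_odd_general N a MK hbin hK hiso

end PaperSplit
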